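/- Let c ≥ 0, C ∈ [0,1], and let g : [0,1] → [0,1] be measurable, symmetric in the sense g(y) = g(1 − y) for all y, with ∫₀¹ g(y) dy = C. Then ∫₀¹ g(y) e^{c·Φ⁻¹(y)} dy = 2 ∫₀^{1/2} g(y) cosh(c·Φ⁻¹(y)) dy, and since y ↦ cosh(c·Φ⁻¹(y)) is monotone decreasing on (0, 1/2], ∫₀¹ g(y) e^{c·Φ⁻¹(y)} dy ≥ ∫_{(1−C)/2}^{(1+C)/2} e^{c·Φ⁻¹(y)} dy = e^{c²/2}·(Φ(Φ⁻¹((1 + C)/2) − c) − Φ(Φ⁻¹((1 − C)/2) − c)), with equality when g is the indicator function of [(1−C)/2, (1+C)/2]. -/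

import Mathlib

open MeasureTheory ProbabilityTheory Real

noncomputable section

/-- The standard normal cumulative distribution function Φ. -/
def Phi (x : ℝ) : ℝ := ((gaussianReal 0 1) (Set.Iic x)).toReal

/-- The inverse Φ⁻¹ of the standard normal CDF (meaningful on (0,1)). -/
def PhiInv : ℝ → ℝ := Function.invFun Phi

/-- The standard normal probability density function Φ'. -/
def stdPdf (x : ℝ) : ℝ := Real.exp (-x ^ 2 / 2) / Real.sqrt (2 * Real.pi)

/-- `Φ(Φ⁻¹(y) - c)` with the conventions `Φ⁻¹(0) = -∞`, `Φ⁻¹(1) = +∞`,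
`Φ(-∞ - c) = 0`, `Φ(+∞ - c) = 1`. -/
def PhiShift (c y : ℝ) : ℝ := if y ≤ 0 then 0 else if 1 ≤ y then 1 else Phi (PhiInv y - c)

/-- `Φ'(Φ⁻¹(y))` with the conventions `Φ⁻¹(0) = -∞`, `Φ⁻¹(1) = +∞`, `Φ'(±∞) = 0`. -/
def pdfAtQuantile (y : ℝ) : ℝ := if y ≤ 0 then 0 else if 1 ≤ y then 0 else stdPdf (PhiInv y)

/-- The isotropic Gaussian measure `N(0, σ²I_d)` on `ℝ^d`. -/
def gaussPi (σ : ℝ) (d : ℕ) : Measure (EuclideanSpace ℝ (Fin d)) :=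
  Measure.map (MeasurableEquiv.toLp 2 (Fin d → ℝ))
    (Measure.pi fun _ : Fin d => gaussianReal 0 (Real.toNNReal (σ ^ 2)))

/-- The Gaussian-smoothed function `p_a(x) = E_{ε ~ N(0,σ²I_d)}[f(x+ε)]`. -/
def smoothed (σ : ℝ) (d : ℕ) (f : EuclideanSpace ℝ (Fin d) → ℝ)
    (x : EuclideanSpace ℝ (Fin d)) : ℝ := ∫ ε, f (x + ε) ∂(gaussPi σ d)

/-- A centered real random variable `Z` is `(a,b)`-subexponential if `E[Z] = 0` and
`E[exp (l Z)] ≤ exp (a² l² / 2)` for all `|l| ≤ 1/b`. -/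
def IsSubexponential {Ω : Type*} [MeasurableSpace Ω] (μ : Measure Ω) (Z : Ω → ℝ)
    (a b : ℝ) : Prop :=
  (∫ ω, Z ω ∂μ) = 0 ∧
    ∀ l : ℝ, |l| ≤ 1 / b → (∫ ω, Real.exp (l * Z ω) ∂μ) ≤ Real.exp (a ^ 2 * l ^ 2 / 2)
/-!
Φ⁻¹ pushes Lebesgue measure on (0, 1) forward to the standard Gaussian, so integrals of
`exp (c Φ⁻¹)` are Gaussian integrals of `exp (c x)`; tilting by `exp (c x)` turns `N(0,1)` into
`exp (c²/2) N(c,1)`, which gives the closed form. Since `Φ⁻¹ (1 - y) = -Φ⁻¹ y`, folding `[0, 1]`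
at `1/2` turns `exp (c Φ⁻¹)` into `2 cosh (c Φ⁻¹)` against symmetric weights. On `(0, 1/2]` the
weight `h = cosh (c Φ⁻¹)` decreases, and for `t = (1 - C)/2` the function `g` has the same mass
as the indicator of `(t, 1/2]`; then `(g - 1_(t, 1/2]) (h - h t) ≥ 0` pointwise (the bathtub
principle), which integrates to the inequality.
-/

open Set

open Classical in
theorem MeasurableEmbedding.measurable_function_invFun {α β : Type*} [MeasurableSpace α]
    [MeasurableSpace β] [Nonempty α] {f : α → β} (hf : MeasurableEmbedding f) :
    Measurable (Function.invFun f) := by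
  have h : Function.invFun f = (range f).piecewise hf.invFun fun _ => Classical.choice ‹_› := by
    funext b
    by_cases hb : b ∈ range f
    · obtain ⟨a, rfl⟩ := hb
      simp [Function.leftInverse_invFun hf.injective a, hf.leftInverse_invFun a]
    · simp [hb, Function.invFun_neg hb]
  rw [h]
  exact hf.measurable_invFun.piecewise hf.measurableSet_range measurable_const

theorem Phi_eq_cdf : Phi = cdf (gaussianReal 0 1) := funext fun x => (cdf_eq_real _ x).symm

theorem Phi_eq_integral (x : ℝ) : Phi x = ∫ t in Iic x, gaussianPDFReal 0 1 t := by
  rw [Phi, gaussianReal_apply_eq_integral 0 one_ne_zero, ENNReal.toReal_ofReal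
    (setIntegral_nonneg measurableSet_Iic fun t _ => gaussianPDFReal_nonneg 0 1 t)]

theorem Phi_sub_Phi (a b : ℝ) : Phi b - Phi a = ∫ t in a..b, gaussianPDFReal 0 1 t := by
  rw [Phi_eq_integral, Phi_eq_integral]
  exact intervalIntegral.integral_Iic_sub_Iic (integrable_gaussianPDFReal 0 1).integrableOn
    (integrable_gaussianPDFReal 0 1).integrableOn

theorem Phi_strictMono : StrictMono Phi := fun a b hab => by
  have := intervalIntegral.intervalIntegral_pos_of_pos
    (integrable_gaussianPDFReal 0 1).intervalIntegrable
    (gaussianPDFReal_pos 0 1 · one_ne_zero) hab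
  linarith [Phi_sub_Phi a b]

theorem continuous_Phi : Continuous Phi := by
  have : Phi = fun x => Phi 0 + ∫ t in (0 : ℝ)..x, gaussianPDFReal 0 1 t :=
    funext fun x => by rw [← Phi_sub_Phi]; ring
  rw [this]
  exact continuous_const.add <| intervalIntegral.continuous_primitive
    (fun _ _ => (integrable_gaussianPDFReal 0 1).intervalIntegrable) 0

theorem Phi_mem_Ioo (x : ℝ) : Phi x ∈ Ioo 0 1 :=
  ⟨(Phi_eq_cdf ▸ cdf_nonneg _ (x - 1)).trans_lt (Phi_strictMono (by linarith)),
    (Phi_strictMono (lt_add_one x)).trans_le (Phi_eq_cdf ▸ cdf_le_one _ (x + 1))⟩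

theorem range_Phi : range Phi = Ioo 0 1 := by
  refine (range_subset_iff.2 Phi_mem_Ioo).antisymm fun y hy => ?_
  refine mem_range_of_exists_le_of_exists_ge continuous_Phi ?_ ?_
  · have h := tendsto_cdf_atBot (μ := gaussianReal 0 1)
    rw [← Phi_eq_cdf] at h
    exact (h.eventually_le_const hy.1).exists
  · have h := tendsto_cdf_atTop (μ := gaussianReal 0 1)
    rw [← Phi_eq_cdf] at h
    exact (h.eventually_const_le hy.2).exists

theorem Phi_PhiInv {y : ℝ} (hy : y ∈ Ioo 0 1) : Phi (PhiInv y) = y :=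
  Function.invFun_eq (range_Phi.symm ▸ hy : y ∈ range Phi)

theorem PhiInv_Phi (x : ℝ) : PhiInv (Phi x) = x :=
  Function.leftInverse_invFun Phi_strictMono.injective x

theorem PhiInv_le_iff_le_Phi {y : ℝ} (hy : y ∈ Ioo 0 1) {x : ℝ} : PhiInv y ≤ x ↔ y ≤ Phi x := by
  rw [← Phi_strictMono.le_iff_le, Phi_PhiInv hy]

theorem PhiInv_monotoneOn : MonotoneOn PhiInv (Ioo 0 1) := fun _ hy _ hz hyz =>
  (PhiInv_le_iff_le_Phi hy).2 (by rwa [Phi_PhiInv hz])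

theorem Phi_neg (x : ℝ) : Phi (-x) = 1 - Phi x := by
  have hsymm : (gaussianReal 0 1).map (fun x => -x) = gaussianReal 0 1 := by
    simpa using gaussianReal_map_neg (μ := 0) (v := 1)
  have := nullSingletonClass_gaussianReal (μ := 0) (v := 1) one_ne_zero
  calc Phi (-x) = ((gaussianReal 0 1).map (fun x => -x)).real (Iic (-x)) := by rw [hsymm]; rfl
    _ = (gaussianReal 0 1).real (Ici x) := by
        rw [map_measureReal_apply measurable_neg measurableSet_Iic]
        simp
    _ = 1 - Phi x := by
        rw [measureReal_congr Ioi_ae_eq_Ici.symm, ← compl_Iic,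
          probReal_compl_eq_one_sub measurableSet_Iic, Phi, measureReal_def]

theorem Phi_zero : Phi 0 = 1 / 2 := by
  have h := Phi_neg 0
  rw [neg_zero] at h
  linarith

theorem PhiInv_one_sub {y : ℝ} (hy : y ∈ Ioo 0 1) : PhiInv (1 - y) = -PhiInv y := by
  rw [← Phi_PhiInv hy, ← Phi_neg, PhiInv_Phi, PhiInv_Phi]

theorem PhiInv_nonpos {y : ℝ} (hy : y ∈ Ioc 0 (1 / 2)) : PhiInv y ≤ 0 :=
  (PhiInv_le_iff_le_Phi ⟨hy.1, by linarith [hy.2]⟩).2 (Phi_zero ▸ hy.2)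

theorem measurable_PhiInv : Measurable PhiInv :=
  (continuous_Phi.measurableEmbedding Phi_strictMono.injective).measurable_function_invFun

theorem PhiInv_preimage_Iic_inter_Ioo (a : ℝ) : PhiInv ⁻¹' Iic a ∩ Ioo 0 1 = Ioc 0 (Phi a) := by
  ext y
  constructor
  · rintro ⟨hya, hy⟩
    exact ⟨hy.1, (PhiInv_le_iff_le_Phi hy).1 hya⟩
  · rintro ⟨hy0, hya⟩
    have hy : y ∈ Ioo 0 1 := ⟨hy0, hya.trans_lt (Phi_mem_Ioo a).2⟩
    exact ⟨(PhiInv_le_iff_le_Phi hy).2 hya, hy⟩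

theorem map_PhiInv_volume_Ioo :
    (volume.restrict (Ioo (0 : ℝ) 1)).map PhiInv = gaussianReal 0 1 := by
  have : IsFiniteMeasure (volume.restrict (Ioo (0 : ℝ) 1)) := ⟨by simp⟩
  refine Measure.ext_of_Iic _ _ fun a => ?_
  rw [Measure.map_apply measurable_PhiInv measurableSet_Iic,
    Measure.restrict_apply (measurable_PhiInv measurableSet_Iic),
    PhiInv_preimage_Iic_inter_Ioo, Real.volume_Ioc, sub_zero, Phi_eq_cdf, ofReal_cdf]

theorem map_PhiInv_volume_Ioc (a : ℝ) :
    (volume.restrict (Ioc 0 (Phi a))).map PhiInv = (gaussianReal 0 1).restrict (Iic a) := by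
  rw [← map_PhiInv_volume_Ioo, Measure.restrict_map measurable_PhiInv measurableSet_Iic,
    Measure.restrict_restrict (measurable_PhiInv measurableSet_Iic), PhiInv_preimage_Iic_inter_Ioo]

theorem integrableOn_exp_mul_PhiInv (c : ℝ) :
    IntegrableOn (fun y => exp (c * PhiInv y)) (Icc 0 1) := by
  rw [integrableOn_Icc_iff_integrableOn_Ioo]
  have h := integrable_exp_mul_gaussianReal (μ := 0) (v := 1) c
  rw [← map_PhiInv_volume_Ioo] at h
  exact (integrable_map_measure h.aestronglyMeasurable measurable_PhiInv.aemeasurable).1 h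

theorem gaussianPDFReal_mul_exp (c x : ℝ) :
    gaussianPDFReal 0 1 x * exp (c * x) = exp (c ^ 2 / 2) * gaussianPDFReal c 1 x := by
  simp only [gaussianPDFReal, NNReal.coe_one, mul_one, sub_zero]
  rw [mul_left_comm, mul_assoc, ← exp_add, ← exp_add]
  ring_nf

theorem setIntegral_exp_mul_gaussianReal (c : ℝ) {s : Set ℝ} (hs : MeasurableSet s) :
    ∫ x in s, exp (c * x) ∂gaussianReal 0 1 = exp (c ^ 2 / 2) * (gaussianReal c 1).real s := by
  rw [← integral_indicator hs, integral_gaussianReal_eq_integral_smul one_ne_zero]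
  simp_rw [smul_eq_mul, ← indicator_mul_right, gaussianPDFReal_mul_exp]
  rw [integral_indicator hs, integral_const_mul, measureReal_def,
    gaussianReal_apply_eq_integral c one_ne_zero, ENNReal.toReal_ofReal
      (setIntegral_nonneg hs fun x _ => gaussianPDFReal_nonneg c 1 x)]

theorem gaussianReal_real_Iic (c a : ℝ) : (gaussianReal c 1).real (Iic a) = Phi (a - c) := by
  rw [← zero_add c, ← gaussianReal_map_add_const, map_measureReal_apply (measurable_add_const c)
    measurableSet_Iic, preimage_add_const_Iic, zero_add]
  rfl

theorem integral_exp_mul_PhiInv_zero (c : ℝ) {y : ℝ} (hy : y ∈ Icc 0 1) :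
    ∫ z in 0..y, exp (c * PhiInv z) = exp (c ^ 2 / 2) * PhiShift c y := by
  have hexp : AEStronglyMeasurable (fun x => exp (c * x)) (gaussianReal 0 1) := by fun_prop
  rcases hy.1.eq_or_lt with rfl | hy0
  · simp [PhiShift]
  rw [intervalIntegral.integral_of_le hy0.le]
  rcases hy.2.eq_or_lt with rfl | hy1
  · rw [integral_Ioc_eq_integral_Ioo, ← integral_map (f := fun x => exp (c * x))
      measurable_PhiInv.aemeasurable (by rwa [map_PhiInv_volume_Ioo]), map_PhiInv_volume_Ioo,
      ← setIntegral_univ, setIntegral_exp_mul_gaussianReal c MeasurableSet.univ]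
    simp [PhiShift]
  · conv_lhs => rw [← Phi_PhiInv ⟨hy0, hy1⟩]
    rw [← integral_map (f := fun x => exp (c * x)) measurable_PhiInv.aemeasurable
        (by rw [map_PhiInv_volume_Ioc]; exact hexp.restrict),
      map_PhiInv_volume_Ioc, setIntegral_exp_mul_gaussianReal c measurableSet_Iic,
      gaussianReal_real_Iic, PhiShift, if_neg hy0.not_ge, if_neg hy1.not_ge]

theorem integral_exp_mul_PhiInv (c : ℝ) {t u : ℝ} (ht : 0 ≤ t) (htu : t ≤ u) (hu : u ≤ 1) :
    ∫ y in t..u, exp (c * PhiInv y) = exp (c ^ 2 / 2) * (PhiShift c u - PhiShift c t) := by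
  have hi := integrableOn_exp_mul_PhiInv c
  rw [← intervalIntegral.integral_interval_sub_left
      (hi.mono_set (uIcc_subset_Icc ⟨le_rfl, zero_le_one⟩ ⟨ht.trans htu, hu⟩)).intervalIntegrable
      (hi.mono_set (uIcc_subset_Icc ⟨le_rfl, zero_le_one⟩ ⟨ht, htu.trans hu⟩)).intervalIntegrable,
    integral_exp_mul_PhiInv_zero c ⟨ht.trans htu, hu⟩,
    integral_exp_mul_PhiInv_zero c ⟨ht, htu.trans hu⟩, mul_sub]

theorem antitoneOn_cosh_mul_PhiInv (c : ℝ) :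
    AntitoneOn (fun y => cosh (c * PhiInv y)) (Ioc 0 (1 / 2)) := by
  intro y hy z hz hyz
  have hle := PhiInv_monotoneOn ⟨hy.1, by linarith [hy.2]⟩ ⟨hz.1, by linarith [hz.2]⟩ hyz
  show cosh (c * PhiInv z) ≤ cosh (c * PhiInv y)
  rw [cosh_le_cosh, abs_mul, abs_mul, abs_of_nonpos (PhiInv_nonpos hz),
    abs_of_nonpos (PhiInv_nonpos hy)]
  exact mul_le_mul_of_nonneg_left (by linarith) (abs_nonneg c)

theorem integrableOn_cosh_mul_PhiInv (c : ℝ) :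
    IntegrableOn (fun y => cosh (c * PhiInv y)) (Icc 0 1) := by
  simp_rw [cosh_eq, ← neg_mul]
  exact ((integrableOn_exp_mul_PhiInv c).add (integrableOn_exp_mul_PhiInv (-c))).div_const 2

theorem IntegrableOn.mul_of_forall_mem_Icc {α : Type*} [MeasurableSpace α] {μ : Measure α}
    {g F : α → ℝ} {s : Set α} (hF : IntegrableOn F s μ) (hs : MeasurableSet s)
    (hg : Measurable g) (hg01 : ∀ y ∈ s, g y ∈ Icc 0 1) :
    IntegrableOn (fun y => g y * F y) s μ :=
  hF.bdd_mul hg.aestronglyMeasurable <| (ae_restrict_iff' hs).2 <| ae_of_all _ fun y hy => by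
    rw [norm_eq_abs, abs_of_nonneg (hg01 y hy).1]
    exact (hg01 y hy).2

theorem integral_eq_integral_add_reflect {E : Type*} [NormedAddCommGroup E] [NormedSpace ℝ E]
    {f : ℝ → E} {a b : ℝ}
    (hf : IntervalIntegrable f volume a b) :
    ∫ x in a..b, f x = ∫ x in a..(a + b) / 2, (f x + f (a + b - x)) := by
  have hm : (a + b) / 2 ∈ uIcc a b := by
    rcases le_total a b with h | h
    · exact mem_uIcc.2 (Or.inl ⟨by linarith, by linarith⟩)
    · exact mem_uIcc.2 (Or.inr ⟨by linarith, by linarith⟩)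
  have h1 := hf.mono_set (uIcc_subset_uIcc left_mem_uIcc hm)
  have h2 := hf.mono_set (uIcc_subset_uIcc hm right_mem_uIcc)
  have hmid : a + b - (a + b) / 2 = (a + b) / 2 := by ring
  have h2' : IntervalIntegrable (fun x => f (a + b - x)) volume a ((a + b) / 2) := by
    simpa [hmid] using (h2.comp_sub_left (a + b)).symm
  rw [intervalIntegral.integral_add h1 h2', intervalIntegral.integral_comp_sub_left, hmid,
    add_sub_cancel_left, intervalIntegral.integral_add_adjacent_intervals h1 h2]

theorem integral_mul_exp_mul_PhiInv_eq_two_mul_integral_cosh {G : ℝ → ℝ} (c : ℝ) {t : ℝ}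
    (ht0 : 0 ≤ t) (ht : t ≤ 1 / 2) (hG : Measurable G) (hG01 : ∀ y ∈ Icc 0 1, G y ∈ Icc 0 1)
    (hGsymm : ∀ y ∈ Ioo 0 1, G (1 - y) = G y) :
    ∫ y in t..1 - t, G y * exp (c * PhiInv y) =
      2 * ∫ y in t..1 / 2, G y * cosh (c * PhiInv y) := by
  have hi : IntervalIntegrable (fun y => G y * exp (c * PhiInv y)) volume t (1 - t) :=
    (IntegrableOn.mul_of_forall_mem_Icc (integrableOn_exp_mul_PhiInv c) measurableSet_Icc hG
      hG01).mono_set (uIcc_subset_Icc ⟨ht0, by linarith⟩ ⟨by linarith, by linarith⟩)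
      |>.intervalIntegrable
  rw [integral_eq_integral_add_reflect hi, add_sub_cancel, ← intervalIntegral.integral_const_mul]
  refine intervalIntegral.integral_congr_ae (ae_of_all _ fun y hy => ?_)
  rw [uIoc_of_le ht] at hy
  have hy01 : y ∈ Ioo 0 1 := ⟨ht0.trans_lt hy.1, by linarith [hy.2]⟩
  rw [hGsymm y hy01, PhiInv_one_sub hy01, cosh_eq]
  ring_nf

theorem setIntegral_le_integral_mul_of_bathtub {α : Type*} [MeasurableSpace α] {μ : Measure α}
    {g h : α → ℝ} {A : Set α} {K : ℝ} (hA : MeasurableSet A) (hAμ : μ A ≠ ⊤)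
    (hg : Integrable g μ) (hh : IntegrableOn h A μ) (hgh : Integrable (fun x => g x * h x) μ)
    (hmass : ∫ x, g x ∂μ = μ.real A)
    (hin : ∀ᵐ x ∂μ, x ∈ A → g x ≤ 1 ∧ h x ≤ K)
    (hout : ∀ᵐ x ∂μ, x ∉ A → 0 ≤ g x ∧ K ≤ h x) :
    ∫ x in A, h x ∂μ ≤ ∫ x, g x * h x ∂μ := by
  have hhA : Integrable (A.indicator h) μ := hh.integrable_indicator hA
  have h1A : Integrable (A.indicator 1) μ :=
    (integrableOn_const (C := (1 : ℝ)) hAμ).integrable_indicator hA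
  have hpos : 0 ≤ ∫ x, (g x - A.indicator 1 x) * (h x - K) ∂μ := by
    refine integral_nonneg_of_ae ?_
    filter_upwards [hin, hout] with x hxin hxout
    by_cases hx : x ∈ A
    · simp only [Pi.zero_apply, indicator_of_mem hx, Pi.one_apply]
      exact mul_nonneg_of_nonpos_of_nonpos (by linarith [hxin hx]) (by linarith [hxin hx])
    · simp only [Pi.zero_apply, indicator_of_notMem hx, sub_zero]
      exact mul_nonneg (hxout hx).1 (by linarith [hxout hx])
  have hexpand : ∀ x, (g x - A.indicator 1 x) * (h x - K) =
      (g x * h x - A.indicator h x) - K * (g x - A.indicator 1 x) := by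
    intro x
    by_cases hx : x ∈ A <;> simp [hx] <;> ring
  simp_rw [hexpand] at hpos
  rw [integral_sub (f := fun x => g x * h x - A.indicator h x)
      (g := fun x => K * (g x - A.indicator 1 x)) (hgh.sub hhA) ((hg.sub h1A).const_mul K),
    integral_sub hgh hhA, integral_const_mul, integral_sub hg h1A, integral_indicator hA,
    integral_indicator_one hA, hmass, sub_self, mul_zero, sub_zero] at hpos
  linarith

theorem integral_cosh_mul_PhiInv_le {g : ℝ → ℝ} (c : ℝ) {t : ℝ} (ht0 : 0 ≤ t) (ht : t ≤ 1 / 2)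
    (hg : Measurable g) (hg01 : ∀ y ∈ Ioc 0 (1 / 2), g y ∈ Icc 0 1)
    (hmass : ∫ y in 0..1 / 2, g y = 1 / 2 - t) :
    ∫ y in t..1 / 2, cosh (c * PhiInv y) ≤ ∫ y in 0..1 / 2, g y * cosh (c * PhiInv y) := by
  have hh : IntegrableOn (fun y => cosh (c * PhiInv y)) (Ioc 0 (1 / 2)) :=
    (integrableOn_cosh_mul_PhiInv c).mono_set fun y hy => ⟨hy.1.le, by linarith [hy.2]⟩
  have hg' : IntegrableOn g (Ioc 0 (1 / 2)) := by
    simpa using IntegrableOn.mul_of_forall_mem_Icc (integrableOn_const (C := (1 : ℝ)) (by simp))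
      measurableSet_Ioc hg hg01
  rw [intervalIntegral.integral_of_le ht, intervalIntegral.integral_of_le (by norm_num)]
  rw [intervalIntegral.integral_of_le (by norm_num)] at hmass
  rcases ht0.eq_or_lt with rfl | ht0
  -- for `t = 0` no level separates the unbounded weight, but then `g = 1` a.e.
  · have hg1 : g =ᵐ[volume.restrict (Ioc 0 (1 / 2))] 1 := by
      refine (integral_eq_iff_of_ae_le hg' (integrable_const 1) ?_).1 (by rw [hmass]; simp)
      exact (ae_restrict_iff' measurableSet_Ioc).2 (ae_of_all _ fun y hy => (hg01 y hy).2)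
    exact (integral_congr_ae (hg1.mono fun y hy => by simp [hy])).ge
  have hA : Ioc t (1 / 2) ∩ Ioc 0 (1 / 2) = Ioc t (1 / 2) :=
    inter_eq_left.2 (Ioc_subset_Ioc_left ht0.le)
  have key := setIntegral_le_integral_mul_of_bathtub (μ := volume.restrict (Ioc 0 (1 / 2)))
    (A := Ioc t (1 / 2)) (K := cosh (c * PhiInv t)) measurableSet_Ioc
    (by rw [Measure.restrict_apply measurableSet_Ioc, hA]; simp) hg' hh.integrable.integrableOn
    (IntegrableOn.mul_of_forall_mem_Icc hh measurableSet_Ioc hg hg01) ?_ ?_ ?_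
  · rwa [Measure.restrict_restrict measurableSet_Ioc, hA] at key
  · rw [hmass, measureReal_restrict_apply measurableSet_Ioc, hA, Real.volume_real_Ioc_of_le ht]
  · refine (ae_restrict_iff' measurableSet_Ioc).2 (ae_of_all _ fun y hy hyA => ⟨(hg01 y hy).2, ?_⟩)
    exact antitoneOn_cosh_mul_PhiInv c ⟨ht0, ht⟩ hy hyA.1.le
  · refine (ae_restrict_iff' measurableSet_Ioc).2 (ae_of_all _ fun y hy hyA => ⟨(hg01 y hy).1, ?_⟩)
    exact antitoneOn_cosh_mul_PhiInv c hy ⟨ht0, ht⟩ (not_lt.1 fun h => hyA ⟨h, hy.2⟩)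

theorem integral_indicator_Icc {f : ℝ → ℝ} {a b t u : ℝ} (hat : a ≤ t) (htu : t ≤ u)
    (hub : u ≤ b) : ∫ x in a..b, (Icc t u).indicator f x = ∫ x in t..u, f x := by
  have hae : (Icc t u).indicator f =ᵐ[volume] (Ioc t u).indicator f :=
    indicator_ae_eq_of_ae_eq_set Ioc_ae_eq_Icc.symm
  rw [intervalIntegral.integral_of_le (hat.trans (htu.trans hub)),
    intervalIntegral.integral_of_le htu, integral_congr_ae (ae_restrict_of_ae hae),
    setIntegral_indicator measurableSet_Ioc, inter_eq_right.2 (Ioc_subset_Ioc hat hub)]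

theorem symmetric_weighted_integral_min_general (c C : ℝ)
    (hC : C ∈ Set.Icc (0 : ℝ) 1)
    (g : ℝ → ℝ) (hg : Measurable g) (hg01 : ∀ y ∈ Set.Icc (0 : ℝ) 1, g y ∈ Set.Icc (0 : ℝ) 1)
    (hsym : ∀ y ∈ Set.Icc (0 : ℝ) 1, g (1 - y) = g y)
    (hint : (∫ y in (0 : ℝ)..1, g y) = C) :
    ((∫ y in (0 : ℝ)..1, g y * Real.exp (c * PhiInv y)) =
      2 * ∫ y in (0 : ℝ)..(1 / 2), g y * Real.cosh (c * PhiInv y)) ∧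
    AntitoneOn (fun y => Real.cosh (c * PhiInv y)) (Set.Ioc (0 : ℝ) (1 / 2)) ∧
    ((∫ y in (0 : ℝ)..1, g y * Real.exp (c * PhiInv y)) ≥
      ∫ y in ((1 - C) / 2)..((1 + C) / 2), Real.exp (c * PhiInv y)) ∧
    ((∫ y in ((1 - C) / 2)..((1 + C) / 2), Real.exp (c * PhiInv y)) =
      Real.exp (c ^ 2 / 2) * (PhiShift c ((1 + C) / 2) - PhiShift c ((1 - C) / 2))) ∧
    ((∀ y ∈ Set.Icc (0 : ℝ) 1,
        g y = Set.indicator (Set.Icc ((1 - C) / 2) ((1 + C) / 2)) (fun _ => (1 : ℝ)) y) →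
      (∫ y in (0 : ℝ)..1, g y * Real.exp (c * PhiInv y)) =
        ∫ y in ((1 - C) / 2)..((1 + C) / 2), Real.exp (c * PhiInv y)) := by
  obtain ⟨hC0, hC1⟩ := hC
  have hsym' : ∀ y ∈ Ioo 0 1, g (1 - y) = g y := fun y hy => hsym y (Ioo_subset_Icc_self hy)
  have hfold := integral_mul_exp_mul_PhiInv_eq_two_mul_integral_cosh c le_rfl (by norm_num)
    hg hg01 hsym'
  have hhalf := integral_mul_exp_mul_PhiInv_eq_two_mul_integral_cosh 0 le_rfl (by norm_num)
    hg hg01 hsym'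
  simp only [zero_mul, exp_zero, cosh_zero, mul_one, sub_zero, hint] at hfold hhalf
  have ht0 : 0 ≤ (1 - C) / 2 := by linarith
  have ht : (1 - C) / 2 ≤ 1 / 2 := by linarith
  have htu : (1 - C) / 2 ≤ (1 + C) / 2 := by linarith
  have hu : (1 + C) / 2 ≤ 1 := by linarith
  have hfold₁ : ∫ y in (1 - C) / 2..(1 + C) / 2, exp (c * PhiInv y) =
      2 * ∫ y in (1 - C) / 2..1 / 2, cosh (c * PhiInv y) := by
    rw [show (1 + C) / 2 = 1 - (1 - C) / 2 by ring]
    simpa using integral_mul_exp_mul_PhiInv_eq_two_mul_integral_cosh (G := fun _ => 1) c ht0 ht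
      measurable_const (fun _ _ => by simp) (fun _ _ => rfl)
  refine ⟨hfold, antitoneOn_cosh_mul_PhiInv c, ?_, integral_exp_mul_PhiInv c ht0 htu hu,
    fun hind => ?_⟩
  · rw [ge_iff_le, hfold, hfold₁]
    gcongr
    exact integral_cosh_mul_PhiInv_le c ht0 ht hg
      (fun y hy => hg01 y ⟨hy.1.le, by linarith [hy.2]⟩) (by linarith)
  · rw [← integral_indicator_Icc ht0 htu hu]
    refine intervalIntegral.integral_congr fun y hy => ?_
    rw [uIcc_of_le zero_le_one] at hy
    simp [hind y hy, indicator_apply]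

/-- symmetric minimization for dipole smoothing: for symmetric
measurable `g : [0,1] → [0,1]` (`g(y) = g(1-y)`) with `∫₀¹ g = C` and `c ≥ 0`,
`∫₀¹ g(y) e^{cΦ⁻¹(y)} dy = 2∫₀^{1/2} g(y) cosh(cΦ⁻¹(y)) dy`; `y ↦ cosh(cΦ⁻¹(y))` is
monotone decreasing on `(0, 1/2]`; and
`∫₀¹ g(y) e^{cΦ⁻¹(y)} dy ≥ ∫_{(1-C)/2}^{(1+C)/2} e^{cΦ⁻¹(y)} dy
= e^{c²/2}(Φ(Φ⁻¹((1+C)/2) - c) - Φ(Φ⁻¹((1-C)/2) - c))`, with equality when `g` is the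
indicator of `[(1-C)/2, (1+C)/2]`. -/
theorem symmetric_weighted_integral_min (c C : ℝ) (hc : 0 ≤ c)
    (hC : C ∈ Set.Icc (0 : ℝ) 1)
    (g : ℝ → ℝ) (hg : Measurable g) (hg01 : ∀ y ∈ Set.Icc (0 : ℝ) 1, g y ∈ Set.Icc (0 : ℝ) 1)
    (hsym : ∀ y ∈ Set.Icc (0 : ℝ) 1, g (1 - y) = g y)
    (hint : (∫ y in (0 : ℝ)..1, g y) = C) :
    ((∫ y in (0 : ℝ)..1, g y * Real.exp (c * PhiInv y)) =
      2 * ∫ y in (0 : ℝ)..(1 / 2), g y * Real.cosh (c * PhiInv y)) ∧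
    AntitoneOn (fun y => Real.cosh (c * PhiInv y)) (Set.Ioc (0 : ℝ) (1 / 2)) ∧
    ((∫ y in (0 : ℝ)..1, g y * Real.exp (c * PhiInv y)) ≥
      ∫ y in ((1 - C) / 2)..((1 + C) / 2), Real.exp (c * PhiInv y)) ∧
    ((∫ y in ((1 - C) / 2)..((1 + C) / 2), Real.exp (c * PhiInv y)) =
      Real.exp (c ^ 2 / 2) * (PhiShift c ((1 + C) / 2) - PhiShift c ((1 - C) / 2))) ∧
    ((∀ y ∈ Set.Icc (0 : ℝ) 1,
        g y = Set.indicator (Set.Icc ((1 - C) / 2) ((1 + C) / 2)) (fun _ => (1 : ℝ)) y) →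
      (∫ y in (0 : ℝ)..1, g y * Real.exp (c * PhiInv y)) =
        ∫ y in ((1 - C) / 2)..((1 + C) / 2), Real.exp (c * PhiInv y)) :=
  symmetric_weighted_integral_min_general c C hC g hg hg01 hsym hint
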